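/- arXiv:1910.12163 — 4 statements merged into one kernel-verified Lean document; each statement's English description precedes it below -/
import Mathlib

section
/- Let d ≥ 1, let w ∈ ℝ^d with w ≠ 0, b ∈ ℝ, and ε > 0. Set v₀ = w/‖w‖₂. Then Ω_ε = Ω(ε v₀) ∪ Ω(−ε v₀); that is, a point x ∈ ℝ^d has an ε-adversarial example if and only if the classification of x changes under at least one of the two perturbations +ε v₀ or −ε v₀. -/
open MeasureTheory ProbabilityTheory
open scoped ENNReal NNReal

/-- Euclidean inner product on `ℝ^d`. -/
noncomputable def dotp {d : ℕ} (w x : Fin d → ℝ) : ℝ := ∑ i, w i * x i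

/-- The `ℓ₂` norm on `ℝ^d`. -/
noncomputable def l2 {d : ℕ} (w : Fin d → ℝ) : ℝ := Real.sqrt (∑ i, (w i)^2)

/-- The product Gaussian measure `N(m, σ²I_d)` on `ℝ^d`. -/
noncomputable def gaussPi {d : ℕ} (m : Fin d → ℝ) (σ : ℝ) : Measure (Fin d → ℝ) :=
  Measure.pi fun i => gaussianReal (m i) ((σ^2).toNNReal)

/-- The standard normal cumulative distribution function `Φ`. -/
noncomputable def Phi (x : ℝ) : ℝ := ((gaussianReal 0 1) (Set.Iic x)).toReal

/-- The `ℓp` norm on `ℝ^d` for `p ∈ [1,∞]` (as an extended real exponent). -/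
noncomputable def lpnorm {d : ℕ} (p : ℝ≥0∞) (v : Fin d → ℝ) : ℝ :=
  if p = ∞ then ⨆ i, |v i| else (∑ i, |v i| ^ p.toReal) ^ (1 / p.toReal)

/-- The `ℓp` norm on `ℝ^d` for a real exponent `p ∈ [1,∞)`. -/
noncomputable def lpR {d : ℕ} (p : ℝ) (v : Fin d → ℝ) : ℝ := (∑ i, |v i| ^ p) ^ (1/p)


lemma dotp_add {d : ℕ} (w x v : Fin d → ℝ) : dotp w (x + v) = dotp w x + dotp w v := by
  simp [dotp, mul_add, Finset.sum_add_distrib]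

lemma dotp_smul {d : ℕ} (w v : Fin d → ℝ) (c : ℝ) : dotp w (c • v) = c * dotp w v := by
  simp only [dotp, Pi.smul_apply, smul_eq_mul, Finset.mul_sum]
  exact Finset.sum_congr rfl fun i _ => by ring

lemma l2_pos {d : ℕ} (w : Fin d → ℝ) (hw : w ≠ 0) : 0 < l2 w := by
  rw [l2, Real.sqrt_pos]
  rcases Function.ne_iff.mp hw with ⟨i, hi⟩
  exact Finset.sum_pos' (fun j _ => sq_nonneg _)
    ⟨i, Finset.mem_univ i, by simpa using pow_pos (abs_pos.mpr (by simpa using hi)) 2 |>.trans_eq (by rw [sq_abs])⟩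

lemma l2_smul {d : ℕ} (v : Fin d → ℝ) (c : ℝ) : l2 (c • v) = |c| * l2 v := by
  rw [l2, l2]
  have : ∑ i, (c • v) i ^ 2 = c^2 * ∑ i, v i ^ 2 := by
    simp [Finset.mul_sum, mul_pow]
  rw [this, Real.sqrt_mul (sq_nonneg c), Real.sqrt_sq_eq_abs]

lemma dotp_self {d : ℕ} (w : Fin d → ℝ) : dotp w w = (l2 w)^2 := by
  rw [l2, Real.sq_sqrt (Finset.sum_nonneg fun i _ => sq_nonneg _)]
  simp [dotp, sq]

lemma abs_dotp_le {d : ℕ} (w v : Fin d → ℝ) : |dotp w v| ≤ l2 w * l2 v := by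
  rw [abs_le]
  constructor
  · have h := Real.sum_mul_le_sqrt_mul_sqrt (Finset.univ : Finset (Fin d)) w (-v)
    simp only [Pi.neg_apply, mul_neg, neg_sq, Finset.sum_neg_distrib] at h
    rw [l2, l2, dotp]
    linarith
  · exact Real.sum_mul_le_sqrt_mul_sqrt _ w v

/-- `Ω_ε = Ω(ε v₀) ∪ Ω(−ε v₀)` for a linear classifier `(w, b)`,
where `v₀ = w / ‖w‖₂`. -/
theorem adversarial_defining_set {d : ℕ} (hd : 1 ≤ d)
    (w : Fin d → ℝ) (hw : w ≠ 0) (b : ℝ) (ε : ℝ) (hε : 0 < ε)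
    (v₀ : Fin d → ℝ) (hv₀ : v₀ = (l2 w)⁻¹ • w) (x : Fin d → ℝ) :
    (∃ v : Fin d → ℝ, l2 v ≤ ε ∧
        Xor' (0 < dotp w x + b) (0 < dotp w (x + v) + b)) ↔
      (Xor' (0 < dotp w x + b) (0 < dotp w (x + ε • v₀) + b) ∨
       Xor' (0 < dotp w x + b) (0 < dotp w (x + (-ε) • v₀) + b)) := by

  have hlw : 0 < l2 w := l2_pos w hw
  have hdv₀ : dotp w v₀ = l2 w := by
    rw [hv₀, dotp_smul, dotp_self, sq]
    field_simp
  have hl2v₀ : l2 v₀ = 1 := by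
    rw [hv₀, l2_smul, abs_of_pos (inv_pos.mpr hlw)]
    field_simp
  have key : ∀ c : ℝ, dotp w (x + c • v₀) + b = (dotp w x + b) + c * l2 w := by
    intro c; rw [dotp_add, dotp_smul, hdv₀]; ring
  set s := dotp w x + b with hs
  constructor
  · rintro ⟨v, hv, hxor⟩
    have habs : |dotp w v| ≤ l2 w * ε := by
      calc |dotp w v| ≤ l2 w * l2 v := abs_dotp_le w v
        _ ≤ l2 w * ε := by nlinarith
    rw [abs_le] at habs
    rw [dotp_add] at hxor
    rw [key, key]
    rcases hxor with ⟨hpos, hneg⟩ | ⟨hpos, hneg⟩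
    · right; left
      exact ⟨hpos, fun h => hneg (by nlinarith)⟩
    · left; right
      exact ⟨by nlinarith, hneg⟩
  · rintro (h | h)
    · exact ⟨ε • v₀, by rw [l2_smul, hl2v₀, abs_of_pos hε]; simp, h⟩
    · exact ⟨(-ε) • v₀, by rw [l2_smul, hl2v₀, abs_neg, abs_of_pos hε]; simp, h⟩
end

section
/- Let d ≥ 1, let w ∈ ℝ^d with w ≠ 0, let μ₀ ∈ ℝ^d be a unit vector with w·μ₀ ≥ 0, let ε > 0 and δ ≥ 0. Set cos θ = (w·μ₀)/‖w‖₂, sin θ = √(1 − cos²θ), and β = min(ε cos θ, δ). Then the supremum of w·v over the set D_{ε,δ} = {v ∈ ℝ^d : ‖v‖₂ ≤ ε and |v·μ₀| ≤ δ} equals ‖w‖₂ · (β cos θ + √(ε² − β²) sin θ), and this supremum is attained. -/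
/-!
Write `w = ‖w‖ cos θ • μ₀ + w⊥` and `v = t • μ₀ + v⊥` with `w⊥, v⊥ ⊥ μ₀`, so that
`‖w⊥‖ = ‖w‖ sin θ` and `‖v⊥‖ ≤ √(ε² - t²)`. Cauchy–Schwarz gives
`w·v ≤ ‖w‖ (t cos θ + √(ε² - t²) sin θ)`, with equality when `v⊥` is the nonnegative multiple of
`w⊥` of that length. The right side is the functional `(cos θ, sin θ)` on the upper half circle
of radius `ε`: it peaks at `t = ε cos θ` and decreases as `t` moves below that point, so under
`|t| ≤ δ` it is largest at `t = β = min (ε cos θ) δ`.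
-/

open MeasureTheory ProbabilityTheory
open scoped ENNReal NNReal

open InnerProductGeometry Real
open scoped RealInnerProductSpace

theorem mul_add_sqrt_sq_sub_sq_mul_le {c s ε β t : ℝ} (hc : 0 ≤ c) (hs : 0 ≤ s) (hε : 0 < ε)
    (hβ : 0 ≤ β) (hβε : β ^ 2 ≤ ε ^ 2) (htβ : t ≤ β) (htε : t ^ 2 ≤ ε ^ 2)
    (hsβ : β * s ≤ √(ε ^ 2 - β ^ 2) * c) :
    t * c + √(ε ^ 2 - t ^ 2) * s ≤ β * c + √(ε ^ 2 - β ^ 2) * s := by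
  set r := √(ε ^ 2 - t ^ 2)
  set σ := √(ε ^ 2 - β ^ 2)
  have hr : 0 ≤ r := sqrt_nonneg _
  have hσ : 0 ≤ σ := sqrt_nonneg _
  have hr2 : r ^ 2 = ε ^ 2 - t ^ 2 := sq_sqrt (by linarith)
  have hσ2 : σ ^ 2 = ε ^ 2 - β ^ 2 := sq_sqrt (by linarith)
  have h_inner : t * β + r * σ ≤ ε ^ 2 :=
    (abs_le_of_sq_le_sq' (by nlinarith [sq_nonneg (t * σ - r * β)]) (by positivity)).2
  have h_cross : t * σ ≤ r * β := by
    rcases le_total t 0 with ht | ht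
    · nlinarith [mul_nonneg hr hβ]
    · have htβ2 : t ^ 2 ≤ β ^ 2 := pow_le_pow_left₀ ht htβ 2
      exact (abs_le_of_sq_le_sq' (by nlinarith [mul_le_mul_of_nonneg_right htβ2 (sq_nonneg ε)])
        (mul_nonneg hr hβ)).2
  -- Split `(c, s)` along `(β, σ)` and the orthogonal direction `(σ, -β)`.
  have key : ε ^ 2 * ((t * c + r * s) - (β * c + σ * s)) =
      (β * c + σ * s) * (t * β + r * σ - ε ^ 2) + (σ * c - β * s) * (t * σ - r * β) := by
    linear_combination (-(t * c + r * s)) * hσ2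
  have : ε ^ 2 * ((t * c + r * s) - (β * c + σ * s)) ≤ 0 := by
    rw [key]
    exact add_nonpos (mul_nonpos_of_nonneg_of_nonpos (by positivity) (by linarith))
      (mul_nonpos_of_nonneg_of_nonpos (by linarith) (by linarith))
  nlinarith [pow_pos hε 2]

theorem mul_add_sqrt_sq_sub_sq_mul_le_min {c s ε δ t : ℝ} (hc : 0 ≤ c) (hs : 0 ≤ s)
    (hcs : c ^ 2 + s ^ 2 = 1) (hε : 0 ≤ ε) (hδ : 0 ≤ δ) (htδ : t ≤ δ) (htε : t ^ 2 ≤ ε ^ 2) :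
    t * c + √(ε ^ 2 - t ^ 2) * s ≤ min (ε * c) δ * c + √(ε ^ 2 - min (ε * c) δ ^ 2) * s := by
  have hc1 : c ≤ 1 := by nlinarith
  rcases le_or_gt (ε * c) δ with h | h
  · rw [min_eq_left h, show ε ^ 2 - (ε * c) ^ 2 = (ε * s) ^ 2 by linear_combination (-ε ^ 2) * hcs,
      sqrt_sq (by positivity)]
    have hr2 : √(ε ^ 2 - t ^ 2) ^ 2 = ε ^ 2 - t ^ 2 := sq_sqrt (by linarith)
    have : t * c + √(ε ^ 2 - t ^ 2) * s ≤ ε :=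
      (abs_le_of_sq_le_sq' (by nlinarith [sq_nonneg (t * s - √(ε ^ 2 - t ^ 2) * c)]) hε).2
    linear_combination this - ε * hcs
  · rw [min_eq_right h.le]
    have hεpos : 0 < ε := by nlinarith
    have hδε : δ ^ 2 ≤ ε ^ 2 := by nlinarith
    refine mul_add_sqrt_sq_sub_sq_mul_le hc hs hεpos hδ hδε htδ htε ?_
    have hσ2 : √(ε ^ 2 - δ ^ 2) ^ 2 = ε ^ 2 - δ ^ 2 := sq_sqrt (by linarith)
    exact (abs_le_of_sq_le_sq' (by nlinarith [mul_le_mul h.le h.le hδ (by positivity)])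
      (by positivity)).2

section UnitVector

variable {E : Type*} [NormedAddCommGroup E] [InnerProductSpace ℝ E] {u : E}

theorem inner_sub_inner_smul_self_eq_zero (hu : ‖u‖ = 1) (v : E) : ⟪v - ⟪v, u⟫ • u, u⟫ = 0 := by
  rw [inner_sub_left, real_inner_smul_left, real_inner_self_eq_norm_sq, hu]
  ring

theorem norm_sub_inner_smul_sq (hu : ‖u‖ = 1) (v : E) :
    ‖v - ⟪v, u⟫ • u‖ ^ 2 = ‖v‖ ^ 2 - ⟪v, u⟫ ^ 2 := by
  rw [← real_inner_self_eq_norm_sq, ← real_inner_self_eq_norm_sq, inner_sub_right,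
    inner_smul_right, inner_sub_inner_smul_self_eq_zero hu, inner_sub_left, real_inner_smul_left,
    real_inner_comm u v]
  ring

theorem inner_eq_inner_mul_inner_add_inner_sub (hu : ‖u‖ = 1) (w v : E) :
    ⟪w, v⟫ = ⟪w, u⟫ * ⟪v, u⟫ + ⟪w - ⟪w, u⟫ • u, v - ⟪v, u⟫ • u⟫ := by
  rw [inner_sub_right, inner_smul_right, inner_sub_inner_smul_self_eq_zero hu, inner_sub_left,
    real_inner_smul_left, real_inner_comm u v]
  ring

theorem inner_eq_norm_mul_cos_angle (hu : ‖u‖ = 1) (w : E) : ⟪w, u⟫ = ‖w‖ * cos (angle w u) := by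
  rw [← cos_angle_mul_norm_mul_norm, hu]
  ring

theorem norm_sub_inner_smul_eq_norm_mul_sin_angle (hu : ‖u‖ = 1) (w : E) :
    ‖w - ⟪w, u⟫ • u‖ = ‖w‖ * sin (angle w u) := by
  have h_sin := sin_angle_mul_norm_mul_norm w u
  rw [real_inner_self_eq_norm_sq, real_inner_self_eq_norm_sq, hu] at h_sin
  rw [← sqrt_sq (norm_nonneg _), norm_sub_inner_smul_sq hu,
    show ‖w‖ ^ 2 - ⟪w, u⟫ ^ 2 = ‖w‖ ^ 2 * 1 ^ 2 - ⟪w, u⟫ * ⟪w, u⟫ by ring, ← h_sin]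
  ring

theorem inner_le_norm_mul_of_norm_le (hu : ‖u‖ = 1) (w : E) {v : E} {ε : ℝ} (hv : ‖v‖ ≤ ε) :
    ⟪w, v⟫ ≤ ‖w‖ * (⟪v, u⟫ * cos (angle w u) + √(ε ^ 2 - ⟪v, u⟫ ^ 2) * sin (angle w u)) := by
  have h_perp : ‖v - ⟪v, u⟫ • u‖ ≤ √(ε ^ 2 - ⟪v, u⟫ ^ 2) := by
    rw [← sqrt_sq (norm_nonneg _), norm_sub_inner_smul_sq hu]
    exact sqrt_le_sqrt (by gcongr)
  have h_cs := real_inner_le_norm (w - ⟪w, u⟫ • u) (v - ⟪v, u⟫ • u)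
  rw [norm_sub_inner_smul_eq_norm_mul_sin_angle hu] at h_cs
  have h_perp' := mul_le_mul_of_nonneg_left h_perp
    (mul_nonneg (norm_nonneg w) (sin_angle_nonneg w u))
  calc ⟪w, v⟫ = ⟪w, u⟫ * ⟪v, u⟫ + ⟪w - ⟪w, u⟫ • u, v - ⟪v, u⟫ • u⟫ :=
        inner_eq_inner_mul_inner_add_inner_sub hu w v
    _ ≤ ⟪w, u⟫ * ⟪v, u⟫ + ‖w‖ * sin (angle w u) * √(ε ^ 2 - ⟪v, u⟫ ^ 2) := by
        gcongr
        exact h_cs.trans h_perp'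
    _ = _ := by rw [inner_eq_norm_mul_cos_angle hu w]; ring

theorem exists_norm_le_inner_eq (hu : ‖u‖ = 1) (w : E) {ε β : ℝ} (hβ : |β| ≤ ε) :
    ∃ v : E, ‖v‖ ≤ ε ∧ ⟪v, u⟫ = β ∧
      ⟪w, v⟫ = ‖w‖ * (β * cos (angle w u) + √(ε ^ 2 - β ^ 2) * sin (angle w u)) := by
  set w' := w - ⟪w, u⟫ • u
  set e := ‖w'‖⁻¹ • w'
  have he_u : ⟪e, u⟫ = 0 := by rw [real_inner_smul_left, inner_sub_inner_smul_self_eq_zero hu, mul_zero]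
  have he : ‖e‖ ≤ 1 := by
    rcases eq_or_ne w' 0 with h | h
    · simp [e, h]
    · exact (norm_smul_inv_norm h).le
  have hw_e : ⟪w, e⟫ = ‖w'‖ := by
    rw [inner_eq_inner_mul_inner_add_inner_sub hu, he_u, zero_smul, sub_zero, mul_zero, zero_add,
      real_inner_smul_right, real_inner_self_eq_norm_sq, inv_mul_eq_div, sq, mul_self_div_self]
  have hε : 0 ≤ ε := (abs_nonneg β).trans hβ
  have hσ2 : √(ε ^ 2 - β ^ 2) ^ 2 = ε ^ 2 - β ^ 2 := sq_sqrt (by nlinarith [sq_abs β, abs_nonneg β])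
  refine ⟨β • u + √(ε ^ 2 - β ^ 2) • e, ?_, ?_, ?_⟩
  · have h_orth : ⟪β • u, √(ε ^ 2 - β ^ 2) • e⟫ = 0 := by
      rw [real_inner_smul_left, real_inner_smul_right, real_inner_comm, he_u]
      ring
    have h_sq := norm_add_sq_eq_norm_sq_add_norm_sq_real h_orth
    rw [norm_smul, norm_smul, hu, norm_of_nonneg (sqrt_nonneg _), norm_eq_abs] at h_sq
    refine (abs_le_of_sq_le_sq' ?_ hε).2
    nlinarith [sq_abs β, mul_le_mul he he (norm_nonneg e) zero_le_one, sq_nonneg (√(ε ^ 2 - β ^ 2))]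
  · rw [inner_add_left, real_inner_smul_left, real_inner_smul_left, real_inner_self_eq_norm_sq, hu,
      he_u]
    ring
  · rw [inner_add_right, real_inner_smul_right, real_inner_smul_right,
      inner_eq_norm_mul_cos_angle hu, hw_e, norm_sub_inner_smul_eq_norm_mul_sin_angle hu]
    ring

theorem isGreatest_inner_image_norm_le_abs_inner_le (hu : ‖u‖ = 1) {w : E} (hwu : 0 ≤ ⟪w, u⟫)
    {ε δ : ℝ} (hε : 0 ≤ ε) (hδ : 0 ≤ δ) :
    IsGreatest ((fun v => ⟪w, v⟫) '' {v | ‖v‖ ≤ ε ∧ |⟪v, u⟫| ≤ δ})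
      (‖w‖ * (min (ε * cos (angle w u)) δ * cos (angle w u) +
        √(ε ^ 2 - min (ε * cos (angle w u)) δ ^ 2) * sin (angle w u))) := by
  set θ := angle w u
  set β := min (ε * cos θ) δ
  have hcos : 0 ≤ cos θ := by rw [cos_angle]; positivity
  have hβ : 0 ≤ β := le_min (mul_nonneg hε hcos) hδ
  have hβε : |β| ≤ ε := by
    rw [abs_of_nonneg hβ]
    exact (min_le_left _ _).trans (mul_le_of_le_one_right hε (cos_le_one θ))
  obtain ⟨v, hvε, hvu, hwv⟩ := exists_norm_le_inner_eq hu w hβε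
  refine ⟨⟨v, ⟨hvε, by rw [hvu, abs_of_nonneg hβ]; exact min_le_right _ _⟩, hwv⟩, ?_⟩
  rintro _ ⟨v, ⟨hvε, hvδ⟩, rfl⟩
  have hvu : ⟪v, u⟫ ^ 2 ≤ ε ^ 2 := by
    obtain ⟨h₁, h₂⟩ := abs_le.1 <|
      (abs_real_inner_le_norm v u).trans (show ‖v‖ * ‖u‖ ≤ ε by rwa [hu, mul_one])
    exact sq_le_sq' h₁ h₂
  exact (inner_le_norm_mul_of_norm_le hu w hvε).trans <| mul_le_mul_of_nonneg_left
    (mul_add_sqrt_sq_sub_sq_mul_le_min hcos (sin_angle_nonneg w u) (cos_sq_add_sin_sq θ) hε hδ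
      (le_of_abs_le hvδ) hvu) (norm_nonneg w)

end UnitVector

theorem dotp_eq_inner {d : ℕ} (w v : Fin d → ℝ) :
    dotp w v = ⟪(WithLp.toLp 2 w : EuclideanSpace ℝ (Fin d)), WithLp.toLp 2 v⟫ := by
  simp [dotp, PiLp.inner_apply, mul_comm]

theorem l2_eq_norm {d : ℕ} (v : Fin d → ℝ) :
    l2 v = ‖(WithLp.toLp 2 v : EuclideanSpace ℝ (Fin d))‖ := by
  simp [l2, EuclideanSpace.norm_eq]

theorem strong_adversarial_sup_general {d : ℕ}
    (w : Fin d → ℝ)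
    (μ₀ : Fin d → ℝ) (hμ₀ : l2 μ₀ = 1) (hwμ : 0 ≤ dotp w μ₀)
    (ε δ : ℝ) (hε : 0 < ε) (hδ : 0 ≤ δ)
    (cosθ sinθ β : ℝ)
    (hcos : cosθ = dotp w μ₀ / l2 w)
    (hsin : sinθ = Real.sqrt (1 - cosθ^2))
    (hβ : β = min (ε * cosθ) δ) :
    IsGreatest ((fun v => dotp w v) '' {v : Fin d → ℝ | l2 v ≤ ε ∧ |dotp v μ₀| ≤ δ})
      (l2 w * (β * cosθ + Real.sqrt (ε^2 - β^2) * sinθ)) := by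
  set W : EuclideanSpace ℝ (Fin d) := WithLp.toLp 2 w
  set U : EuclideanSpace ℝ (Fin d) := WithLp.toLp 2 μ₀
  have hU : ‖U‖ = 1 := by rw [← l2_eq_norm, hμ₀]
  have hcos' : cosθ = cos (angle W U) := by
    rw [hcos, cos_angle, hU, mul_one, dotp_eq_inner, l2_eq_norm]
  have hsin' : sinθ = sin (angle W U) := by
    rw [hsin, hcos', sin_eq_sqrt_one_sub_cos_sq (angle_nonneg W U) (angle_le_pi W U)]
  have h_image : (fun v => dotp w v) '' {v : Fin d → ℝ | l2 v ≤ ε ∧ |dotp v μ₀| ≤ δ} =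
      (fun x => ⟪W, x⟫) '' {x | ‖x‖ ≤ ε ∧ |⟪x, U⟫| ≤ δ} := by
    simp only [dotp_eq_inner, l2_eq_norm]
    exact (Set.image_comp _ _ _).trans
      (congrArg _ (Set.image_preimage_eq {x | ‖x‖ ≤ ε ∧ |⟪x, U⟫| ≤ δ} (WithLp.toLp_surjective 2)))
  rw [h_image, hβ, hcos', hsin', l2_eq_norm]
  exact isGreatest_inner_image_norm_le_abs_inner_le hU (by rwa [dotp_eq_inner] at hwμ) hε.le hδ

/-- the supremum of `w·v` over `D_{ε,δ} = {v : ‖v‖₂ ≤ ε, |v·μ₀| ≤ δ}`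
equals `‖w‖₂ (β cos θ + √(ε² − β²) sin θ)` and is attained. -/
theorem strong_adversarial_sup {d : ℕ} (hd : 1 ≤ d)
    (w : Fin d → ℝ) (hw : w ≠ 0)
    (μ₀ : Fin d → ℝ) (hμ₀ : l2 μ₀ = 1) (hwμ : 0 ≤ dotp w μ₀)
    (ε δ : ℝ) (hε : 0 < ε) (hδ : 0 ≤ δ)
    (cosθ sinθ β : ℝ)
    (hcos : cosθ = dotp w μ₀ / l2 w)
    (hsin : sinθ = Real.sqrt (1 - cosθ^2))
    (hβ : β = min (ε * cosθ) δ) :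
    IsGreatest ((fun v => dotp w v) '' {v : Fin d → ℝ | l2 v ≤ ε ∧ |dotp v μ₀| ≤ δ})
      (l2 w * (β * cosθ + Real.sqrt (ε^2 - β^2) * sinθ)) :=
  strong_adversarial_sup_general w μ₀ hμ₀ hwμ ε δ hε hδ cosθ sinθ β hcos hsin hβ
end

section
/- Let σ > 0, ε ≥ 0, μ, w ∈ ℝ^d with w ≠ 0, and b' ∈ ℝ. If w·μ ≥ ε‖w‖₂, then the adversarial-error rate expression satisfies 1 − (1/2)[Φ((w·μ + b')/(‖w‖₂σ) − ε/σ) + Φ((w·μ − b')/(‖w‖₂σ) − ε/σ)] ≥ 1 − Φ(‖μ‖₂/σ − ε/σ). -/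
open MeasureTheory ProbabilityTheory
open scoped ENNReal NNReal

lemma continuous_pdf : Continuous (gaussianPDFReal 0 1) := by
  rw [gaussianPDFReal_def]
  fun_prop

lemma Phi_sub_Phi {a b : ℝ} (hab : a ≤ b) :
    Phi b - Phi a = ∫ x in a..b, gaussianPDFReal 0 1 x := by
  have h1 : Phi b = Phi a + ((gaussianReal 0 1) (Set.Ioc a b)).toReal := by
    unfold Phi
    rw [← ENNReal.toReal_add (measure_ne_top _ _) (measure_ne_top _ _),
      ← measure_union _ measurableSet_Ioc, Set.Iic_union_Ioc_eq_Iic hab]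
    exact Set.Iic_disjoint_Ioc le_rfl
  rw [h1, intervalIntegral.integral_of_le hab]
  rw [gaussianReal_apply_eq_integral 0 one_ne_zero]
  rw [ENNReal.toReal_ofReal]
  · ring
  · exact integral_nonneg (fun x => gaussianPDFReal_nonneg _ _ _)

lemma Phi_mono : Monotone Phi := by
  intro a b hab
  unfold Phi
  exact ENNReal.toReal_mono (measure_ne_top _ _) (measure_mono (Set.Iic_subset_Iic.2 hab))

lemma key {a u : ℝ} (ha : 0 ≤ a) (hu : 0 ≤ u) :
    Phi (a + u) + Phi (a - u) ≤ 2 * Phi a := by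
  have h1 : Phi (a + u) - Phi a = ∫ x in (0:ℝ)..u, gaussianPDFReal 0 1 (x + a) := by
    rw [intervalIntegral.integral_comp_add_right, zero_add, Phi_sub_Phi (by linarith)]
    rw [add_comm a u]
  have h2 : Phi a - Phi (a - u) = ∫ x in (0:ℝ)..u, gaussianPDFReal 0 1 (a - x) := by
    rw [intervalIntegral.integral_comp_sub_left, sub_zero, Phi_sub_Phi (by linarith)]
  have h3 : (∫ x in (0:ℝ)..u, gaussianPDFReal 0 1 (x + a)) ≤
      ∫ x in (0:ℝ)..u, gaussianPDFReal 0 1 (a - x) := by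
    apply intervalIntegral.integral_mono_on hu
    · exact ((continuous_pdf.comp (by continuity)).intervalIntegrable _ _)
    · exact ((continuous_pdf.comp (by continuity)).intervalIntegrable _ _)
    · intro x hx
      simp only [gaussianPDFReal, NNReal.coe_one, mul_one, sub_zero]
      have hx0 : 0 ≤ x := hx.1
      exact mul_le_mul_of_nonneg_left
        (Real.exp_le_exp.2 (by nlinarith [mul_nonneg ha hx0])) (by positivity)
  linarith

lemma key' {a : ℝ} (ha : 0 ≤ a) (u : ℝ) :
    Phi (a + u) + Phi (a - u) ≤ 2 * Phi a := by
  rcases le_total 0 u with hu | hu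
  · exact key ha hu
  · have := key ha (neg_nonneg.2 hu)
    rw [← sub_eq_add_neg, sub_neg_eq_add] at this
    linarith

/-- lower bound on the adversarial-error rate when `w·μ ≥ ε‖w‖₂`. -/
theorem adversarial_error_lower_bound {d : ℕ} (σ ε : ℝ) (hσ : 0 < σ) (hε : 0 ≤ ε)
    (μ w : Fin d → ℝ) (hw : w ≠ 0) (b' : ℝ)
    (h : ε * l2 w ≤ dotp w μ) :
    1 - (1/2) * (Phi ((dotp w μ + b') / (l2 w * σ) - ε / σ) +
                  Phi ((dotp w μ - b') / (l2 w * σ) - ε / σ)) ≥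
      1 - Phi (l2 μ / σ - ε / σ) := by
  obtain ⟨i, hi⟩ := Function.ne_iff.1 hw
  have hl2 : 0 < l2 w := by
    apply Real.sqrt_pos.2
    exact Finset.sum_pos' (fun j _ => sq_nonneg _)
      ⟨i, Finset.mem_univ i, by nlinarith [sq_nonneg (w i), sq_abs (w i), abs_pos.2 hi]⟩
  have hns : 0 < l2 w * σ := mul_pos hl2 hσ
  set a : ℝ := dotp w μ / (l2 w * σ) - ε / σ with ha_def
  set u : ℝ := b' / (l2 w * σ) with hu_def
  have e1 : (dotp w μ + b') / (l2 w * σ) - ε / σ = a + u := by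
    rw [ha_def, hu_def, add_div]; ring
  have e2 : (dotp w μ - b') / (l2 w * σ) - ε / σ = a - u := by
    rw [ha_def, hu_def, sub_div]; ring
  have ha : 0 ≤ a := by
    rw [ha_def, sub_nonneg, div_le_div_iff₀ hσ hns]
    nlinarith [mul_le_mul_of_nonneg_right h hσ.le]
  have hcs : dotp w μ ≤ l2 w * l2 μ := Real.sum_mul_le_sqrt_mul_sqrt Finset.univ w μ
  have hle : a ≤ l2 μ / σ - ε / σ := by
    rw [ha_def]
    have : dotp w μ / (l2 w * σ) ≤ l2 μ / σ := by
      rw [div_le_div_iff₀ hns hσ]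
      nlinarith [mul_le_mul_of_nonneg_right hcs hσ.le]
    linarith
  have hkey := key' ha u
  have hmono := Phi_mono hle
  rw [e1, e2]
  linarith
end

section
/- (Quantitative form of Theorem 4, case 1 ≤ p ≤ 2.) Let d ≥ 1, p ∈ [1,2] with conjugate exponent q ∈ [2,∞], σ > 0, η > 0, and set ε = η d^{1/p} σ. Let w ∈ ℝ^d with w ≠ 0, b' ∈ ℝ, and μ ∈ ℝ^d with w·μ ≥ ε‖w‖_q. Then 1 − (1/2)[Φ((w·μ + b')/(‖w‖₂σ) − (‖w‖_q/‖w‖₂)(ε/σ)) + Φ((w·μ − b')/(‖w‖₂σ) − (‖w‖_q/‖w‖₂)(ε/σ))] ≥ 1 − Φ(‖μ‖₂/σ − η√d). In particular, the ℓp-adversarial-error rate of any such linear classifier on balanced Gaussian mixture data is at least 1 − Φ(‖μ‖₂/σ − η√d). -/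
open MeasureTheory ProbabilityTheory
open scoped ENNReal NNReal

lemma Phi_eq (x : ℝ) : Phi x = ∫ t in Set.Iic x, gaussianPDFReal 0 1 t := by
  rw [Phi, gaussianReal_apply_eq_integral 0 one_ne_zero,
    ENNReal.toReal_ofReal (setIntegral_nonneg measurableSet_Iic
      (fun t _ => gaussianPDFReal_nonneg 0 1 t))]

lemma Phi_diff {a b : ℝ} (hab : a ≤ b) :
    Phi b - Phi a = ∫ t in a..b, gaussianPDFReal 0 1 t := by
  rw [Phi_eq, Phi_eq, intervalIntegral.integral_of_le hab]
  have : ∫ t in Set.Iic b, gaussianPDFReal 0 1 t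
      = (∫ t in Set.Iic a, gaussianPDFReal 0 1 t) + ∫ t in Set.Ioc a b, gaussianPDFReal 0 1 t := by
    rw [← setIntegral_union (Set.Iic_disjoint_Ioc le_rfl) measurableSet_Ioc
      (integrable_gaussianPDFReal 0 1).integrableOn (integrable_gaussianPDFReal 0 1).integrableOn,
      Set.Iic_union_Ioc_eq_Iic hab]
  linarith

lemma pdf_le {a b : ℝ} (h : b^2 ≤ a^2) : gaussianPDFReal 0 1 a ≤ gaussianPDFReal 0 1 b := by
  simp only [gaussianPDFReal, sub_zero, NNReal.coe_one, mul_one]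
  refine mul_le_mul_of_nonneg_left (Real.exp_le_exp.2 (by linarith)) (by positivity)

lemma Phi_mid_aux {s c : ℝ} (hs : 0 ≤ s) (hc : 0 ≤ c) :
    Phi (s + c) + Phi (s - c) ≤ 2 * Phi s := by
  have h1 : Phi (s + c) - Phi s = ∫ x in (0:ℝ)..c, gaussianPDFReal 0 1 (x + s) := by
    rw [intervalIntegral.integral_comp_add_right (gaussianPDFReal 0 1) s, zero_add,
      Phi_diff (by linarith), add_comm s c]
  have h2 : Phi s - Phi (s - c) = ∫ x in (0:ℝ)..c, gaussianPDFReal 0 1 (s - x) := by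
    rw [intervalIntegral.integral_comp_sub_left (gaussianPDFReal 0 1) s, sub_zero,
      Phi_diff (by linarith)]
  have key : (∫ x in (0:ℝ)..c, gaussianPDFReal 0 1 (x + s))
      ≤ ∫ x in (0:ℝ)..c, gaussianPDFReal 0 1 (s - x) := by
    apply intervalIntegral.integral_mono_on hc
    · exact ((integrable_gaussianPDFReal 0 1).comp_add_right s).intervalIntegrable
    · exact ((integrable_gaussianPDFReal 0 1).comp_sub_left s).intervalIntegrable
    · intro x hx
      exact pdf_le (by nlinarith [hx.1])
  linarith

lemma Phi_mid {s : ℝ} (hs : 0 ≤ s) (c : ℝ) :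
    Phi (s + c) + Phi (s - c) ≤ 2 * Phi s := by
  rcases le_total 0 c with hc | hc
  · exact Phi_mid_aux hs hc
  · have := Phi_mid_aux hs (neg_nonneg.2 hc)
    rw [sub_neg_eq_add, ← sub_eq_add_neg] at this
    linarith

lemma norm_comp {d : ℕ} (hd : 1 ≤ d) (w : Fin d → ℝ) {r : ℝ} (hr : 2 ≤ r) :
    Real.sqrt d * Real.sqrt (∑ i, (w i)^2)
      ≤ (d : ℝ) ^ (1 - 1/r) * (∑ i, |w i| ^ r) ^ (1/r) := by
  have hd0 : (0:ℝ) < d := by exact_mod_cast Nat.lt_of_lt_of_le Nat.zero_lt_one hd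
  have hr0 : (0:ℝ) < r := by linarith
  set S2 : ℝ := ∑ i, (w i)^2 with hS2
  set Sr : ℝ := ∑ i, |w i| ^ r with hSr
  have hS2n : 0 ≤ S2 := Finset.sum_nonneg fun i _ => sq_nonneg _
  have hSrn : 0 ≤ Sr := Finset.sum_nonneg fun i _ => Real.rpow_nonneg (abs_nonneg _) r
  have habs : ∀ x : ℝ, ((x^2 : ℝ)) ^ (r/2 : ℝ) = |x| ^ r := by
    intro x
    rw [← sq_abs, ← Real.rpow_natCast |x| 2, ← Real.rpow_mul (abs_nonneg x)]
    push_cast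
    congr 1
    field_simp
  have pm : ((1/(d:ℝ)) * S2) ^ (r/2 : ℝ) ≤ (1/(d:ℝ)) * Sr := by
    have := Real.rpow_arith_mean_le_arith_mean_rpow Finset.univ (fun _ => 1/(d:ℝ))
      (fun i => (w i)^2) (fun i _ => by positivity)
      (by simp [Finset.sum_const, Finset.card_univ]; field_simp)
      (fun i _ => sq_nonneg _) (by linarith : (1:ℝ) ≤ r/2)
    simpa [← Finset.mul_sum, habs, hS2, hSr] using this
  have key : (1/(d:ℝ)) * S2 ≤ ((1/(d:ℝ)) * Sr) ^ (2/r : ℝ) := by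
    have h1 := Real.rpow_le_rpow (Real.rpow_nonneg (by positivity) _) pm (by positivity : (0:ℝ) ≤ 2/r)
    have e : (r/2)*(2/r) = 1 := by field_simp
    rwa [← Real.rpow_mul (by positivity), e, Real.rpow_one] at h1
  have key2 : S2 ≤ (d:ℝ) ^ (1 - 2/r) * Sr ^ (2/r : ℝ) := by
    have h2 : ((1/(d:ℝ)) * Sr) ^ (2/r : ℝ) = ((d:ℝ))^(-(2/r) : ℝ) * Sr ^ (2/r : ℝ) := by
      rw [Real.mul_rpow (by positivity) hSrn, one_div, ← Real.rpow_neg_one,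
        ← Real.rpow_mul hd0.le, neg_one_mul]
    rw [h2] at key
    have := mul_le_mul_of_nonneg_left key hd0.le
    calc S2 = (d:ℝ) * ((1/(d:ℝ)) * S2) := by field_simp
    _ ≤ (d:ℝ) * ((d:ℝ)^(-(2/r):ℝ) * Sr ^ (2/r:ℝ)) := this
    _ = (d:ℝ) ^ (1 - 2/r) * Sr ^ (2/r : ℝ) := by
        rw [← mul_assoc]
        congr 1
        rw [show (1 - 2/r : ℝ) = 1 + (-(2/r)) by ring, Real.rpow_add hd0, Real.rpow_one]
  have hRn : 0 ≤ (d : ℝ) ^ (1 - 1/r) * Sr ^ (1/r) := by positivity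
  calc Real.sqrt d * Real.sqrt S2 = Real.sqrt ((d:ℝ) * S2) := (Real.sqrt_mul hd0.le _).symm
  _ ≤ Real.sqrt (((d : ℝ) ^ (1 - 1/r) * Sr ^ (1/r))^2) := by
      apply Real.sqrt_le_sqrt
      rw [mul_pow, ← Real.rpow_natCast ((d:ℝ)^(1-1/r)) 2, ← Real.rpow_natCast (Sr^(1/r:ℝ)) 2,
        ← Real.rpow_mul hd0.le, ← Real.rpow_mul hSrn]
      push_cast
      have e1 : (1 - 1/r) * 2 = 1 + (1 - 2/r) := by ring
      rw [e1, Real.rpow_add hd0, Real.rpow_one]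
      have e2 : (1/r) * 2 = 2/r := by ring
      rw [e2, mul_assoc]
      exact mul_le_mul_of_nonneg_left key2 hd0.le
  _ = (d : ℝ) ^ (1 - 1/r) * Sr ^ (1/r) := Real.sqrt_sq hRn

/-- Theorem 4, case `1 ≤ p ≤ 2`: with `ε = η d^{1/p} σ` and
`w·μ ≥ ε‖w‖_q`, the `ℓp`-adversarial-error rate is at least `1 − Φ(‖μ‖₂/σ − η√d)`. -/
theorem lp_adversarial_error_bound_small_p {d : ℕ} (hd : 1 ≤ d)
    (p q : ℝ≥0∞) (hp1 : 1 ≤ p) (hp2 : p ≤ 2) (hpq : 1/p + 1/q = 1)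
    (σ η : ℝ) (hσ : 0 < σ) (hη : 0 < η)
    (ε : ℝ) (hε : ε = η * (d : ℝ) ^ (1 / p.toReal) * σ)
    (w : Fin d → ℝ) (hw : w ≠ 0) (b' : ℝ)
    (μ : Fin d → ℝ) (h : ε * lpnorm q w ≤ dotp w μ) :
    1 - (1/2) * (Phi ((dotp w μ + b') / (l2 w * σ) - (lpnorm q w / l2 w) * (ε / σ)) +
                  Phi ((dotp w μ - b') / (l2 w * σ) - (lpnorm q w / l2 w) * (ε / σ))) ≥
      1 - Phi (l2 μ / σ - η * Real.sqrt d) := by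
  have hd0 : (0:ℝ) < d := by exact_mod_cast Nat.lt_of_lt_of_le Nat.zero_lt_one hd
  have hp0 : p ≠ 0 := by intro hp; rw [hp] at hp1; simp at hp1
  have hptop : p ≠ ⊤ := by
    intro hp; rw [hp] at hp2
    exact absurd (le_antisymm le_top hp2) (by norm_num)
  -- key norm inequality
  have hkey : Real.sqrt d * l2 w ≤ (d:ℝ)^(1/p.toReal) * lpnorm q w := by
    by_cases hq : q = ∞
    · have hp1' : p = 1 := by
        rw [hq] at hpq
        simpa [one_div, ENNReal.inv_eq_one] using hpq
      have hpt : p.toReal = 1 := by rw [hp1']; simp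
      rw [hpt, lpnorm, if_pos hq]
      have : Nonempty (Fin d) := ⟨⟨0, hd⟩⟩
      set M := ⨆ i, |w i| with hM
      have hMi : ∀ i, |w i| ≤ M :=
        fun i => le_ciSup (f := fun j => |w j|) (Set.Finite.bddAbove (Set.finite_range _)) i
      have hM0 : 0 ≤ M := le_trans (abs_nonneg _) (hMi ⟨0, hd⟩)
      have hS2 : (∑ i, (w i)^2) ≤ (d:ℝ) * M^2 := by
        calc (∑ i, (w i)^2) ≤ ∑ _i : Fin d, M^2 := by
              apply Finset.sum_le_sum
              intro i _
              rw [← sq_abs]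
              exact pow_le_pow_left₀ (abs_nonneg _) (hMi i) 2
        _ = (d:ℝ) * M^2 := by simp [Finset.sum_const, Finset.card_univ, mul_comm]
      have hl2 : l2 w ≤ Real.sqrt d * M := by
        rw [l2]
        calc Real.sqrt (∑ i, (w i)^2) ≤ Real.sqrt ((d:ℝ) * M^2) := Real.sqrt_le_sqrt hS2
        _ = Real.sqrt d * M := by rw [Real.sqrt_mul hd0.le, Real.sqrt_sq hM0]
      calc Real.sqrt d * l2 w ≤ Real.sqrt d * (Real.sqrt d * M) :=
            mul_le_mul_of_nonneg_left hl2 (Real.sqrt_nonneg _)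
      _ = (d:ℝ) * M := by rw [← mul_assoc, Real.mul_self_sqrt hd0.le]
      _ = (d:ℝ)^((1:ℝ)/1) * M := by norm_num
    · have hq0 : q ≠ 0 := by
        intro h0; rw [h0] at hpq; simp at hpq
      set r := q.toReal with hrdef
      have hr0 : 0 < r := ENNReal.toReal_pos hq0 hq
      have hconj : 1/p.toReal + 1/r = 1 := by
        have := congrArg ENNReal.toReal hpq
        rwa [ENNReal.toReal_add (by simp [hp0]) (by simp [hq0]), one_div, one_div,
          ENNReal.toReal_inv, ENNReal.toReal_inv, ENNReal.toReal_one,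
          ← one_div, ← one_div] at this
      have hpt1 : 1 ≤ p.toReal := by
        have := ENNReal.toReal_mono hptop hp1
        simpa using this
      have hpt2 : p.toReal ≤ 2 := by
        have := ENNReal.toReal_mono (by norm_num : (2:ℝ≥0∞) ≠ ⊤) hp2
        simpa using this
      have hr2 : 2 ≤ r := by
        have h12 : (1:ℝ)/2 ≤ 1/p.toReal := one_div_le_one_div_of_le (by linarith) hpt2
        have hr12 : 1/r ≤ 1/2 := by linarith
        rw [div_le_div_iff₀ hr0 two_pos] at hr12
        linarith
      have he : 1/p.toReal = 1 - 1/r := by linarith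
      rw [lpnorm, if_neg hq, he, ← hrdef]
      exact norm_comp hd w hr2
  -- positivity facts
  have hL2 : 0 < l2 w := by
    rw [l2, Real.sqrt_pos]
    obtain ⟨i, hi⟩ := Function.ne_iff.1 hw
    exact Finset.sum_pos' (fun j _ => sq_nonneg _) ⟨i, Finset.mem_univ i, by rw [← sq_abs]; exact pow_pos (abs_pos.2 hi) 2⟩
  have hLq : 0 < lpnorm q w := by
    have hlhs : 0 < Real.sqrt d * l2 w := mul_pos (Real.sqrt_pos.2 hd0) hL2
    nlinarith [Real.rpow_pos_of_pos hd0 (1/p.toReal), lt_of_lt_of_le hlhs hkey]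
  have hε0 : 0 < ε := by rw [hε]; positivity
  -- rewrite Phi arguments
  set s := (dotp w μ - ε * lpnorm q w) / (l2 w * σ) with hsdef
  set c := b' / (l2 w * σ) with hcdef
  have hA : (dotp w μ + b') / (l2 w * σ) - (lpnorm q w / l2 w) * (ε / σ) = s + c := by
    rw [hsdef, hcdef]; field_simp; ring
  have hB : (dotp w μ - b') / (l2 w * σ) - (lpnorm q w / l2 w) * (ε / σ) = s - c := by
    rw [hsdef, hcdef]; field_simp; ring
  have hs0 : 0 ≤ s := div_nonneg (by linarith) (le_of_lt (mul_pos hL2 hσ))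
  -- s ≤ T
  have hCS : dotp w μ ≤ l2 w * l2 μ := by
    rw [dotp, l2, l2]
    exact Real.sum_mul_le_sqrt_mul_sqrt Finset.univ w μ
  have h2 : η * Real.sqrt d * σ * l2 w ≤ ε * lpnorm q w := by
    have h2' := mul_le_mul_of_nonneg_left hkey (mul_nonneg hη.le hσ.le)
    rw [hε]
    nlinarith [h2']
  have hsT : s ≤ l2 μ / σ - η * Real.sqrt d := by
    rw [hsdef, div_le_iff₀ (by positivity)]
    have expand : (l2 μ / σ - η * Real.sqrt d) * (l2 w * σ)
        = l2 w * l2 μ - η * Real.sqrt d * σ * l2 w := by field_simp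
    rw [expand]
    linarith
  rw [hA, hB]
  have hmid := Phi_mid hs0 c
  have hmono := Phi_mono hsT
  linarith
end
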